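/- Let T : ℝ → ℝ^{N×N} be a family of matrices whose entries are differentiable at t₀, with each T_t column-stochastic, and let π : Fin N → ℝ be strictly positive with (T_t π)_j > 0 for all j and all t in a neighborhood of t₀. Define M_t = T̂_t T_t, where T̂_t is the Bayes-recovery matrix of T_t with prior π. Then t ↦ M_t is differentiable at t₀; denoting its entrywise derivative by Ṁ, for every fixed d : Fin N → ℝ the function f(t) = ∑_i (d_i − (M_t d)_i)² / π_i is differentiable at t₀ with f'(t₀) = −2 ∑_i (d_i − (M_{t₀} d)_i) (Ṁ d)_i / π_i = −2 ∑_i d_i ( (I − M_{t₀}) Ṁ d )_i / π_i. (Derivative identity underlying Theorem 4: the rate of change of the Fisher distance between the initial state π + d and the Bayes-retrodicted state π + M_t d is controlled by (I − M_t)Ṁ_t.) -/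

import Mathlib

open Finset

/-! The entries of `M_t = T̂_t T_t` are rational functions of the entries of `T_t` whose
denominators `(T_t π)_k` do not vanish at `t₀`, so `M` is differentiable, and the chain rule
gives the first formula for `f'`. The second one follows from it because `M_{t₀}` is
self-adjoint for the weighted inner product `∑ i, a i * b i / π i`: the weighted matrix
`M_{ik} π_k = ∑_l π_i T_{li} T_{lk} π_k / (Tπ)_l` is symmetric in `i` and `k`. -/

namespace Matrix

variable {ι κ : Type*} [Fintype ι] [Fintype κ]

noncomputable def bayesRecovery (T : Matrix κ ι ℝ) (π : ι → ℝ) : Matrix ι κ ℝ :=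
  of fun i j => π i * T j i / (T *ᵥ π) j

theorem bayesRecovery_mul_apply (T : Matrix κ ι ℝ) (π : ι → ℝ) (i j : ι) :
    (bayesRecovery T π * T) i j = ∑ k, π i * T k i / (T *ᵥ π) k * T k j := by
  simp only [mul_apply, bayesRecovery, of_apply]

theorem bayesRecovery_mul_apply_mul_comm (T : Matrix κ ι ℝ) (π : ι → ℝ) (i j : ι) :
    (bayesRecovery T π * T) i j * π j = (bayesRecovery T π * T) j i * π i := by
  simp only [bayesRecovery_mul_apply, sum_mul]
  exact sum_congr rfl fun k _ => by ring

theorem sum_mulVec_mul_div_eq_sum_mul_mulVec_div {M : Matrix ι ι ℝ} {π : ι → ℝ}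
    (hM : ∀ i j, M i j * π j = M j i * π i) (hπ : ∀ i, π i ≠ 0) (x y : ι → ℝ) :
    ∑ i, (M *ᵥ x) i * y i / π i = ∑ i, x i * (M *ᵥ y) i / π i := by
  have hM' : ∀ i j, M i j / π i = M j i / π j := fun i j => by
    rw [div_eq_div_iff (hπ i) (hπ j)]
    linarith [hM i j]
  calc ∑ i, (M *ᵥ x) i * y i / π i
      = ∑ i, ∑ j, M i j / π i * x j * y i := by
        simp only [mulVec, dotProduct, sum_mul, sum_div]
        exact sum_congr rfl fun i _ => sum_congr rfl fun j _ => by ring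
    _ = ∑ j, ∑ i, M j i / π j * x j * y i := by
        rw [sum_comm]
        exact sum_congr rfl fun j _ => sum_congr rfl fun i _ => by rw [hM']
    _ = ∑ j, x j * (M *ᵥ y) j / π j := by
        simp only [mulVec, dotProduct, mul_sum, sum_div]
        exact sum_congr rfl fun j _ => sum_congr rfl fun i _ => by ring

end Matrix

open Matrix

section Derivatives

variable {m n : Type*} [Fintype n] {t₀ : ℝ}

theorem hasDerivAt_mulVec_apply {A : ℝ → Matrix m n ℝ}
    (hA : ∀ i j, DifferentiableAt ℝ (fun t => A t i j) t₀) (v : n → ℝ) (i : m) :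
    HasDerivAt (fun t => (A t *ᵥ v) i) (∑ j, deriv (fun t => A t i j) t₀ * v j) t₀ :=
  HasDerivAt.fun_sum fun j _ => (hA i j).hasDerivAt.mul_const (v j)

theorem differentiableAt_bayesRecovery_mul_apply [Fintype m] {T : ℝ → Matrix m n ℝ} {π : n → ℝ}
    (hT : ∀ k i, DifferentiableAt ℝ (fun t => T t k i) t₀) (hTπ : ∀ k, (T t₀ *ᵥ π) k ≠ 0)
    (i j : n) :
    DifferentiableAt ℝ (fun t => (bayesRecovery (T t) π * T t) i j) t₀ := by
  simp only [bayesRecovery_mul_apply]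
  exact DifferentiableAt.fun_sum fun k _ =>
    (((hT k i).const_mul (π i)).div (hasDerivAt_mulVec_apply hT π k).differentiableAt
      (hTπ k)).mul (hT k j)

theorem hasDerivAt_sum_sq_sub_div {g : ℝ → n → ℝ} {g' : n → ℝ} (d w : n → ℝ)
    (hg : ∀ i, HasDerivAt (fun t => g t i) (g' i) t₀) :
    HasDerivAt (fun t => ∑ i, (d i - g t i) ^ 2 / w i)
      (-2 * ∑ i, (d i - g t₀ i) * g' i / w i) t₀ := by
  refine (HasDerivAt.fun_sum fun i _ =>
    (((hg i).const_sub (d i)).fun_pow 2).div_const (w i)).congr_deriv ?_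
  rw [mul_sum]
  exact sum_congr rfl fun i _ => by ring

end Derivatives

theorem retrodicted_fisher_derivative_general (N : ℕ)
    (T : ℝ → Matrix (Fin N) (Fin N) ℝ) (t₀ : ℝ)
    (hTdiff : ∀ i j, DifferentiableAt ℝ (fun t => T t i j) t₀)
    (π : Fin N → ℝ) (hπ : ∀ i, 0 < π i)
    (hTπ : ∀ᶠ t in nhds t₀, ∀ j, 0 < (T t).mulVec π j)
    (M : ℝ → Matrix (Fin N) (Fin N) ℝ)
    (hM : ∀ t i j, M t i j = ∑ k, (π i * T t k i / (T t).mulVec π k) * T t k j) :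
    (∀ i j, DifferentiableAt ℝ (fun t => M t i j) t₀) ∧
    ∀ d : Fin N → ℝ,
      DifferentiableAt ℝ (fun t => ∑ i, (d i - (M t).mulVec d i) ^ 2 / π i) t₀ ∧
      deriv (fun t => ∑ i, (d i - (M t).mulVec d i) ^ 2 / π i) t₀
        = -2 * ∑ i, (d i - (M t₀).mulVec d i)
            * (∑ j, deriv (fun t => M t i j) t₀ * d j) / π i ∧
      deriv (fun t => ∑ i, (d i - (M t).mulVec d i) ^ 2 / π i) t₀
        = -2 * ∑ i, d i *
            ((∑ j, deriv (fun t => M t i j) t₀ * d j)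
              - ∑ k, M t₀ i k * (∑ j, deriv (fun t => M t k j) t₀ * d j)) / π i := by
  have hM_eq : ∀ t, M t = bayesRecovery (T t) π * T t := fun t => by
    ext i j
    rw [hM, bayesRecovery_mul_apply]
  have hMdiff : ∀ i j, DifferentiableAt ℝ (fun t => M t i j) t₀ := by
    simpa only [hM_eq] using
      differentiableAt_bayesRecovery_mul_apply hTdiff fun k => (hTπ.self_of_nhds k).ne'
  refine ⟨hMdiff, fun d => ?_⟩
  have hf := hasDerivAt_sum_sq_sub_div d π (hasDerivAt_mulVec_apply hMdiff d)
  refine ⟨hf.differentiableAt, hf.deriv, hf.deriv.trans ?_⟩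
  set v : Fin N → ℝ := fun i => ∑ j, deriv (fun t => M t i j) t₀ * d j
  have hself := sum_mulVec_mul_div_eq_sum_mul_mulVec_div
    (bayesRecovery_mul_apply_mul_comm (T t₀) π) (fun i => (hπ i).ne') d v
  rw [← hM_eq] at hself
  change -2 * ∑ i, (d i - (M t₀ *ᵥ d) i) * v i / π i
    = -2 * ∑ i, d i * (v i - (M t₀ *ᵥ v) i) / π i
  simp only [sub_mul, mul_sub, sub_div, sum_sub_distrib, hself]

/-- Derivative identity underlying Theorem 4: with `M_t = T̂_t T_t` the
Bayes-retrodicted evolution, `t ↦ M_t` is differentiable (entrywise) at `t₀`, and the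
squared Fisher distance `f(t) = ∑ i, (d i − (M_t d) i)² / π i` between the initial state
`π + d` and the retrodicted state `π + M_t d` is differentiable at `t₀` with
`f'(t₀) = −2⟨d − M d, Ṁ d⟩ = −2⟨d, (I − M) Ṁ d⟩` (weighted by `1/π`). -/
theorem retrodicted_fisher_derivative (N : ℕ)
    (T : ℝ → Matrix (Fin N) (Fin N) ℝ) (t₀ : ℝ)
    (hTdiff : ∀ i j, DifferentiableAt ℝ (fun t => T t i j) t₀)
    (hTnonneg : ∀ t i j, 0 ≤ T t i j) (hTcol : ∀ t j, ∑ i, T t i j = 1)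
    (π : Fin N → ℝ) (hπ : ∀ i, 0 < π i)
    (hTπ : ∀ᶠ t in nhds t₀, ∀ j, 0 < (T t).mulVec π j)
    (M : ℝ → Matrix (Fin N) (Fin N) ℝ)
    (hM : ∀ t i j, M t i j = ∑ k, (π i * T t k i / (T t).mulVec π k) * T t k j) :
    (∀ i j, DifferentiableAt ℝ (fun t => M t i j) t₀) ∧
    ∀ d : Fin N → ℝ,
      DifferentiableAt ℝ (fun t => ∑ i, (d i - (M t).mulVec d i) ^ 2 / π i) t₀ ∧
      deriv (fun t => ∑ i, (d i - (M t).mulVec d i) ^ 2 / π i) t₀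
        = -2 * ∑ i, (d i - (M t₀).mulVec d i)
            * (∑ j, deriv (fun t => M t i j) t₀ * d j) / π i ∧
      deriv (fun t => ∑ i, (d i - (M t).mulVec d i) ^ 2 / π i) t₀
        = -2 * ∑ i, d i *
            ((∑ j, deriv (fun t => M t i j) t₀ * d j)
              - ∑ k, M t₀ i k * (∑ j, deriv (fun t => M t k j) t₀ * d j)) / π i :=
  retrodicted_fisher_derivative_general N T t₀ hTdiff π hπ hTπ M hM
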